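/- Let φ be a flow on X, F : X → ℝ a positive continuous function, and μ a φ-invariant Borel probability measure. Define the measure μ^F on X by μ^F(G) = (∫ G·F dμ)/(∫ F dμ) for continuous G. Then μ^F is a Borel probability measure invariant under the reparametrized flow φ^F. -/

import Mathlib

/-!
Write `ν = F μ`, `κ(x, t) = ∫₀ᵗ F(φ_s x) ds` and `φ^F_u x = φ_{α(x,u)} x`. For measurable `g ≥ 0`
the substitution `u = κ(x, s)` turns `∫₀ᵗ ∫ g ∘ φ^F_u dν du` into
`∫ F(x) ∫_{0 < s ≤ α(x,t)} F(φ_s x) g(φ_s x) ds dμ(x)`. The map `(s, x) ↦ (-s, φ_s x)` preserves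
`Leb × μ` because `μ` is `φ`-invariant, and after it the inner integral becomes
`∫_{α(y,-t) ≤ r < 0} F(φ_r y) dr = t`. Hence `∫₀ᵗ ν ∘ (φ^F_u)⁻¹ du = t ν` for every `t`;
comparing this on `[0, s + 1]` and on `[0, s]` and using the flow property of `φ^F` gives
`ν ∘ (φ^F_s)⁻¹ = ν`, and `μ^F` is `ν` normalized.
-/

open MeasureTheory Set
open scoped ENNReal

noncomputable section

variable {X : Type*}

/-- The time the reparametrized flow needs to go from `x` to `φ t x`. -/
def timeChange (φ : ℝ → X → X) (F : X → ℝ) (x : X) (t : ℝ) : ℝ :=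
  ∫ s in (0 : ℝ)..t, F (φ s x)

def reparametrize (φ : ℝ → X → X) (α : X → ℝ → ℝ) (t : ℝ) (x : X) : X :=
  φ (α x t) x

@[simp]
theorem timeChange_zero (φ : ℝ → X → X) (F : X → ℝ) (x : X) : timeChange φ F x 0 = 0 :=
  intervalIntegral.integral_same

theorem reparametrize_zero {φ : ℝ → X → X} {F : X → ℝ} {α : X → ℝ → ℝ} (hφ0 : ∀ x, φ 0 x = x)
    (hα₁ : ∀ x t, α x (timeChange φ F x t) = t) (x : X) : reparametrize φ α 0 x = x := by
  have hα0 : α x 0 = 0 := by simpa using hα₁ x 0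
  rw [reparametrize, hα0, hφ0]

end

section TimeChange

variable [TopologicalSpace X] {φ : ℝ → X → X} {F : X → ℝ}

theorem continuous_timeChange (hφ : Continuous fun p : ℝ × X => φ p.1 p.2) (hF : Continuous F) :
    Continuous fun p : X × ℝ => timeChange φ F p.1 p.2 :=
  intervalIntegral.continuous_parametric_primitive_of_continuous
    (f := fun x s => F (φ s x)) (hF.comp (hφ.comp continuous_swap))

theorem hasDerivAt_timeChange (hφ : Continuous fun p : ℝ × X => φ p.1 p.2) (hF : Continuous F)
    (x : X) (s : ℝ) : HasDerivAt (timeChange φ F x) (F (φ s x)) s :=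
  ((hF.comp (hφ.comp (continuous_id.prodMk continuous_const))).integral_hasStrictDerivAt
    0 s).hasDerivAt

theorem strictMono_timeChange (hφ : Continuous fun p : ℝ × X => φ p.1 p.2) (hF : Continuous F)
    (hFpos : ∀ x, 0 < F x) (x : X) : StrictMono (timeChange φ F x) :=
  strictMono_of_deriv_pos fun s => (hasDerivAt_timeChange hφ hF x s).deriv ▸ hFpos _

theorem timeChange_add (hφ : Continuous fun p : ℝ × X => φ p.1 p.2) (hF : Continuous F)
    (hφadd : ∀ t s x, φ (t + s) x = φ t (φ s x)) (x : X) (a b : ℝ) :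
    timeChange φ F x (a + b) = timeChange φ F x a + timeChange φ F (φ a x) b := by
  have hint (c d : ℝ) : IntervalIntegrable (fun s => F (φ s x)) volume c d :=
    (hF.comp (hφ.comp (continuous_id.prodMk continuous_const))).intervalIntegrable c d
  rw [timeChange, timeChange, timeChange,
    ← intervalIntegral.integral_add_adjacent_intervals (hint 0 a) (hint a (a + b))]
  simp_rw [← hφadd]
  rw [intervalIntegral.integral_comp_add_right (fun s => F (φ s x)), zero_add, add_comm b a]

theorem timeChange_flow_neg (hφ : Continuous fun p : ℝ × X => φ p.1 p.2) (hF : Continuous F)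
    (hφadd : ∀ t s x, φ (t + s) x = φ t (φ s x)) (x : X) (r : ℝ) :
    timeChange φ F (φ r x) (-r) = -timeChange φ F x r := by
  have := timeChange_add hφ hF hφadd x r (-r)
  rw [add_neg_cancel, timeChange_zero] at this
  linarith

theorem lintegral_image_timeChange (hφ : Continuous fun p : ℝ × X => φ p.1 p.2)
    (hF : Continuous F) (hFpos : ∀ x, 0 < F x) (x : X) {s : Set ℝ} (hs : MeasurableSet s)
    (g : ℝ → ℝ≥0∞) :
    ∫⁻ u in timeChange φ F x '' s, g u =
      ∫⁻ r in s, ENNReal.ofReal (F (φ r x)) * g (timeChange φ F x r) := by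
  rw [lintegral_image_eq_lintegral_abs_deriv_mul hs
    (fun r _ => (hasDerivAt_timeChange hφ hF x r).hasDerivWithinAt)
    (strictMono_timeChange hφ hF hFpos x).injective.injOn]
  simp_rw [abs_of_pos (hFpos _)]

end TimeChange

section Reparametrize

variable [TopologicalSpace X] {φ : ℝ → X → X} {F : X → ℝ} {α : X → ℝ → ℝ}

theorem measurable_inverse_timeChange [MeasurableSpace X] [OpensMeasurableSpace X]
    (hφ : Continuous fun p : ℝ × X => φ p.1 p.2) (hF : Continuous F) (hFpos : ∀ x, 0 < F x)
    (hα₂ : ∀ x t, timeChange φ F x (α x t) = t) : Measurable fun p : ℝ × X => α p.2 p.1 := by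
  refine measurable_of_Iic fun s => ?_
  have hpre : (fun p : ℝ × X => α p.2 p.1) ⁻¹' Iic s = {p | p.1 ≤ timeChange φ F p.2 s} := by
    ext p
    simp only [mem_preimage, mem_Iic, mem_ofPred_eq]
    rw [← (strictMono_timeChange hφ hF hFpos p.2).le_iff_le, hα₂]
  rw [hpre]
  exact measurableSet_le measurable_fst
    ((continuous_timeChange hφ hF).comp (continuous_snd.prodMk continuous_const)).measurable

theorem measurable_uncurry_reparametrize [MeasurableSpace X] [BorelSpace X]
    (hφ : Continuous fun p : ℝ × X => φ p.1 p.2) (hF : Continuous F) (hFpos : ∀ x, 0 < F x)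
    (hα₂ : ∀ x t, timeChange φ F x (α x t) = t) :
    Measurable (Function.uncurry (reparametrize φ α)) :=
  hφ.measurable.comp ((measurable_inverse_timeChange hφ hF hFpos hα₂).prodMk measurable_snd)

theorem measurable_reparametrize [MeasurableSpace X] [BorelSpace X]
    (hφ : Continuous fun p : ℝ × X => φ p.1 p.2) (hF : Continuous F) (hFpos : ∀ x, 0 < F x)
    (hα₂ : ∀ x t, timeChange φ F x (α x t) = t) (t : ℝ) : Measurable (reparametrize φ α t) :=
  (measurable_uncurry_reparametrize hφ hF hFpos hα₂).comp measurable_prodMk_left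

theorem reparametrize_add (hφ : Continuous fun p : ℝ × X => φ p.1 p.2) (hF : Continuous F)
    (hφadd : ∀ t s x, φ (t + s) x = φ t (φ s x))
    (hα₁ : ∀ x t, α x (timeChange φ F x t) = t) (hα₂ : ∀ x t, timeChange φ F x (α x t) = t)
    (a b : ℝ) (x : X) :
    reparametrize φ α a (reparametrize φ α b x) = reparametrize φ α (a + b) x := by
  set y := φ (α x b) x
  have hcocycle : α x (b + a) = α x b + α y a := by
    rw [← hα₁ x (α x b + α y a), timeChange_add hφ hF hφadd, hα₂, hα₂]
  rw [reparametrize, reparametrize, reparametrize, add_comm a b, hcocycle, add_comm, hφadd]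

theorem setLIntegral_Ioc_reparametrize (hφ : Continuous fun p : ℝ × X => φ p.1 p.2)
    (hF : Continuous F) (hFpos : ∀ x, 0 < F x)
    (hα₁ : ∀ x t, α x (timeChange φ F x t) = t) (hα₂ : ∀ x t, timeChange φ F x (α x t) = t)
    (x : X) (t : ℝ) (g : X → ℝ≥0∞) :
    ∫⁻ u in Ioc 0 t, g (reparametrize φ α u x) =
      ∫⁻ s in Ioc 0 (α x t), ENNReal.ofReal (F (φ s x)) * g (φ s x) := by
  have himage : timeChange φ F x '' Ioc 0 (α x t) = Ioc 0 t := by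
    simpa [hα₂] using ((strictMono_timeChange hφ hF hFpos x).orderIsoOfRightInverse _ (α x)
      (hα₂ x)).image_Ioc 0 (α x t)
  rw [← himage, lintegral_image_timeChange hφ hF hFpos x measurableSet_Ioc]
  simp only [reparametrize, hα₁]

theorem setLIntegral_Ico_inverse_timeChange (hφ : Continuous fun p : ℝ × X => φ p.1 p.2)
    (hF : Continuous F) (hFpos : ∀ x, 0 < F x) (hα₂ : ∀ x t, timeChange φ F x (α x t) = t)
    (x : X) (t : ℝ) :
    ∫⁻ r in Ico (α x (-t)) 0, ENNReal.ofReal (F (φ r x)) = ENNReal.ofReal t := by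
  have himage : timeChange φ F x '' Ico (α x (-t)) 0 = Ico (-t) 0 := by
    simpa [hα₂] using ((strictMono_timeChange hφ hF hFpos x).orderIsoOfRightInverse _ (α x)
      (hα₂ x)).image_Ico (α x (-t)) 0
  have := lintegral_image_timeChange hφ hF hFpos x (measurableSet_Ico (a := α x (-t)) (b := 0))
    fun _ => 1
  simp only [himage, mul_one, setLIntegral_one, Real.volume_Ico, sub_neg_eq_add, zero_add]
    at this
  exact this.symm

theorem neg_mem_Ioc_inverse_timeChange_iff (hφ : Continuous fun p : ℝ × X => φ p.1 p.2)
    (hF : Continuous F) (hFpos : ∀ x, 0 < F x) (hφadd : ∀ t s x, φ (t + s) x = φ t (φ s x))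
    (hα₂ : ∀ x t, timeChange φ F x (α x t) = t) (x : X) (r t : ℝ) :
    -r ∈ Ioc 0 (α (φ r x) t) ↔ r ∈ Ico (α x (-t)) 0 := by
  simp only [mem_Ioc, mem_Ico, neg_pos]
  rw [← (strictMono_timeChange hφ hF hFpos _).le_iff_le, hα₂, timeChange_flow_neg hφ hF hφadd,
    ← (strictMono_timeChange hφ hF hFpos x).le_iff_le (b := r), hα₂, neg_le, and_comm]

end Reparametrize

section Measures

variable [MeasurableSpace X]

theorem neZero_withDensity_ofReal {μ : Measure X} [NeZero μ] {F : X → ℝ} (hF : Measurable F)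
    (hFpos : ∀ x, 0 < F x) : NeZero (μ.withDensity fun x => ENNReal.ofReal (F x)) :=
  ⟨fun h => by
    obtain ⟨x, hx⟩ :=
      ((withDensity_eq_zero_iff (ENNReal.measurable_ofReal.comp hF).aemeasurable).1 h).exists
    simp only [Function.comp_apply, Pi.zero_apply, ENNReal.ofReal_eq_zero] at hx
    exact (hFpos x).not_ge hx⟩

theorem setLIntegral_prod_symm_of_measurableSet {Y : Type*} [MeasurableSpace Y] {μ : Measure X}
    {ν : Measure Y} [SFinite μ] [SFinite ν] {A : Set (X × Y)} (hA : MeasurableSet A)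
    {f : X × Y → ℝ≥0∞} (hf : Measurable f) :
    ∫⁻ p in A, f p ∂μ.prod ν = ∫⁻ y, ∫⁻ x in (fun x => (x, y)) ⁻¹' A, f (x, y) ∂μ ∂ν := by
  rw [← lintegral_indicator hA, lintegral_prod_symm' _ (hf.indicator hA)]
  refine lintegral_congr fun y => ?_
  rw [← lintegral_indicator (measurable_prodMk_right hA)]
  rfl

theorem setLIntegral_prod_eq_lintegral_setLIntegral_neg_flow {μ : Measure X} [SFinite μ]
    {φ : ℝ → X → X} (hφ : Measurable fun p : ℝ × X => φ p.1 p.2)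
    (hinv : ∀ t, μ.map (φ t) = μ) {A : Set (ℝ × X)} (hA : MeasurableSet A)
    {f : ℝ × X → ℝ≥0∞} (hf : Measurable f) :
    ∫⁻ p in A, f p ∂volume.prod μ =
      ∫⁻ y, (∫⁻ r in {r | (-r, φ r y) ∈ A}, f (-r, φ r y)) ∂μ := by
  have hΦ : MeasurePreserving (fun p : ℝ × X => (-p.1, φ p.1 p.2)) (volume.prod μ)
      (volume.prod μ) :=
    (Measure.measurePreserving_neg volume).skew_product hφ (ae_of_all _ hinv)
  rw [← hΦ.setLIntegral_comp_preimage hA hf,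
    setLIntegral_prod_symm_of_measurableSet (f := fun p : ℝ × X => f (-p.1, φ p.1 p.2))
      (hΦ.measurable hA) (hf.comp hΦ.measurable)]
  rfl

theorem map_eq_self_of_setLIntegral_Ioc {ψ : ℝ → X → X} (hψ : ∀ t, Measurable (ψ t))
    (hψ0 : ∀ x, ψ 0 x = x) (hψadd : ∀ a b x, ψ a (ψ b x) = ψ (a + b) x)
    {ν : Measure X} [IsFiniteMeasure ν]
    (havg : ∀ S, MeasurableSet S → ∀ t, 0 ≤ t →
      ∫⁻ u in Ioc 0 t, ν (ψ u ⁻¹' S) = ENNReal.ofReal t * ν S)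
    (t : ℝ) : ν.map (ψ t) = ν := by
  have hnonneg (s : ℝ) (hs : 0 ≤ s) : ν.map (ψ s) = ν := by
    ext S hS
    rw [Measure.map_apply (hψ s) hS]
    -- Both `ν (ψ s ⁻¹' S)` and `ν S` are the integral of `u ↦ ν (ψ u ⁻¹' S)` over
    -- `[s, s + 1]`: the first by `havg` for `ψ s ⁻¹' S` on `[0, 1]`, the second by `havg`
    -- on `[0, s] ∪ [s, s + 1]`.
    have hshift : ∫⁻ u in Ioc 0 1, ν (ψ (s + u) ⁻¹' S) = ν (ψ s ⁻¹' S) := by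
      simpa [preimage_preimage, hψadd] using havg (ψ s ⁻¹' S) (hψ s hS) 1 zero_le_one
    have htranslate : ∫⁻ u in Ioc 0 1, ν (ψ (s + u) ⁻¹' S) =
        ∫⁻ u in Ioc s (s + 1), ν (ψ u ⁻¹' S) := by
      rw [(measurePreserving_add_left volume s).setLIntegral_comp_emb
        (measurableEmbedding_addLeft s) (fun u => ν (ψ u ⁻¹' S)), image_const_add_Ioc, add_zero]
    have hsplit := havg S hS (s + 1) (by linarith)
    rw [← Ioc_union_Ioc_eq_Ioc hs (by linarith), lintegral_union measurableSet_Ioc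
      (Ioc_disjoint_Ioc_of_le le_rfl), havg S hS s hs, ← htranslate, hshift,
      ENNReal.ofReal_add hs zero_le_one, ENNReal.ofReal_one, add_mul, one_mul] at hsplit
    exact (ENNReal.add_right_inj (ENNReal.mul_ne_top ENNReal.ofReal_ne_top
      (measure_ne_top ν S))).1 hsplit
  rcases le_or_gt 0 t with ht | ht
  · exact hnonneg t ht
  · have hcancel : ψ t ∘ ψ (-t) = id := funext fun x => by simp [hψadd, hψ0]
    conv_lhs => rw [← hnonneg (-t) (by linarith), Measure.map_map (hψ t) (hψ (-t)), hcancel]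
    exact Measure.map_id

end Measures

section ReparametrizedMeasure

variable [TopologicalSpace X] [MeasurableSpace X] [BorelSpace X] {φ : ℝ → X → X} {F : X → ℝ}
  {α : X → ℝ → ℝ} {μ : Measure X} [SFinite μ]

theorem lintegral_Ioc_lintegral_reparametrize (hφ : Continuous fun p : ℝ × X => φ p.1 p.2)
    (hφ0 : ∀ x, φ 0 x = x) (hφadd : ∀ t s x, φ (t + s) x = φ t (φ s x)) (hF : Continuous F)
    (hFpos : ∀ x, 0 < F x) (hα₁ : ∀ x t, α x (timeChange φ F x t) = t)
    (hα₂ : ∀ x t, timeChange φ F x (α x t) = t) (hinv : ∀ t, μ.map (φ t) = μ)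
    {g : X → ℝ≥0∞} (hg : Measurable g) (t : ℝ) :
    ∫⁻ u in Ioc 0 t, ∫⁻ x, ENNReal.ofReal (F x) * g (reparametrize φ α u x) ∂μ =
      ENNReal.ofReal t * ∫⁻ x, ENNReal.ofReal (F x) * g x ∂μ := by
  set H : ℝ × X → ℝ≥0∞ := fun p => ENNReal.ofReal (F p.2) *
    (ENNReal.ofReal (F (φ p.1 p.2)) * g (φ p.1 p.2))
  set A : Set (ℝ × X) := {p | p.1 ∈ Ioc 0 (α p.2 t)}
  have hFm : Measurable fun x => ENNReal.ofReal (F x) :=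
    ENNReal.measurable_ofReal.comp hF.measurable
  have hH : Measurable H :=
    (hFm.comp measurable_snd).mul ((hFm.comp hφ.measurable).mul (hg.comp hφ.measurable))
  have hA : MeasurableSet A :=
    (measurableSet_lt measurable_const measurable_fst).inter (measurableSet_le measurable_fst
      ((measurable_inverse_timeChange hφ hF hFpos hα₂).comp
        (measurable_const.prodMk measurable_snd)))
  have hreturn (r : ℝ) (y : X) : φ (-r) (φ r y) = y := by rw [← hφadd, neg_add_cancel, hφ0]
  calc ∫⁻ u in Ioc 0 t, ∫⁻ x, ENNReal.ofReal (F x) * g (reparametrize φ α u x) ∂μ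
      = ∫⁻ x, ENNReal.ofReal (F x) * (∫⁻ u in Ioc 0 t, g (reparametrize φ α u x)) ∂μ := by
        rw [lintegral_lintegral_swap ((hFm.comp measurable_snd).mul
          (hg.comp (measurable_uncurry_reparametrize hφ hF hFpos hα₂))).aemeasurable]
        simp_rw [lintegral_const_mul' _ _ ENNReal.ofReal_ne_top]
    _ = ∫⁻ x, (∫⁻ s in Ioc 0 (α x t), H (s, x)) ∂μ := by
        simp_rw [setLIntegral_Ioc_reparametrize hφ hF hFpos hα₁ hα₂,
          ← lintegral_const_mul' _ _ ENNReal.ofReal_ne_top]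
        rfl
    _ = ∫⁻ p in A, H p ∂(volume.prod μ) := (setLIntegral_prod_symm_of_measurableSet hA hH).symm
    _ = ∫⁻ y, (∫⁻ r in Ico (α y (-t)) 0,
          ENNReal.ofReal (F (φ r y)) * (ENNReal.ofReal (F y) * g y)) ∂μ := by
        rw [setLIntegral_prod_eq_lintegral_setLIntegral_neg_flow hφ.measurable hinv hA hH]
        simp only [A, H, mem_ofPred_eq, neg_mem_Ioc_inverse_timeChange_iff hφ hF hFpos hφadd hα₂,
          ofPred_mem_eq, hreturn]
    _ = ENNReal.ofReal t * ∫⁻ x, ENNReal.ofReal (F x) * g x ∂μ := by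
        refine (lintegral_congr fun y => ?_).trans (lintegral_const_mul' _ _ ENNReal.ofReal_ne_top)
        rw [lintegral_mul_const (f := fun r => ENNReal.ofReal (F (φ r y))) _
          (hFm.comp (hφ.comp (continuous_id.prodMk continuous_const)).measurable),
          setLIntegral_Ico_inverse_timeChange hφ hF hFpos hα₂]

theorem setLIntegral_Ioc_withDensity_preimage_reparametrize
    (hφ : Continuous fun p : ℝ × X => φ p.1 p.2) (hφ0 : ∀ x, φ 0 x = x)
    (hφadd : ∀ t s x, φ (t + s) x = φ t (φ s x)) (hF : Continuous F) (hFpos : ∀ x, 0 < F x)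
    (hα₁ : ∀ x t, α x (timeChange φ F x t) = t) (hα₂ : ∀ x t, timeChange φ F x (α x t) = t)
    (hinv : ∀ t, μ.map (φ t) = μ) {S : Set X} (hS : MeasurableSet S) (t : ℝ) :
    ∫⁻ u in Ioc 0 t, μ.withDensity (fun x => ENNReal.ofReal (F x)) (reparametrize φ α u ⁻¹' S) =
      ENNReal.ofReal t * μ.withDensity (fun x => ENNReal.ofReal (F x)) S := by
  have hFm : Measurable fun x => ENNReal.ofReal (F x) :=
    ENNReal.measurable_ofReal.comp hF.measurable
  have hν (T : Set X) (hT : MeasurableSet T) : μ.withDensity (fun x => ENNReal.ofReal (F x)) T =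
      ∫⁻ x, ENNReal.ofReal (F x) * T.indicator 1 x ∂μ := by
    rw [← lintegral_indicator_one hT,
      lintegral_withDensity_eq_lintegral_mul _ hFm (measurable_one.indicator hT)]
    rfl
  have hpre (u : ℝ) : μ.withDensity (fun x => ENNReal.ofReal (F x)) (reparametrize φ α u ⁻¹' S) =
      ∫⁻ x, ENNReal.ofReal (F x) * S.indicator 1 (reparametrize φ α u x) ∂μ :=
    hν _ (measurable_reparametrize hφ hF hFpos hα₂ u hS)
  simp_rw [hpre, hν S hS]
  exact lintegral_Ioc_lintegral_reparametrize hφ hφ0 hφadd hF hFpos hα₁ hα₂ hinv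
    (measurable_one.indicator hS) t

end ReparametrizedMeasure

/-- If `μ` is a `φ`-invariant Borel probability measure and `F > 0` is continuous, then
the measure `μ^F` with `μ^F(G) = (∫ G·F dμ)/(∫ F dμ)` is a Borel probability measure
invariant under the reparametrized flow `φ^F`. -/
theorem reparametrized_measure_invariant
    {X : Type*} [MetricSpace X] [CompactSpace X] [MeasurableSpace X] [BorelSpace X]
    (φ : ℝ → X → X)
    (hφc : Continuous fun p : ℝ × X => φ p.1 p.2)
    (hφ0 : ∀ x, φ 0 x = x)
    (hφadd : ∀ t s x, φ (t + s) x = φ t (φ s x))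
    (F : X → ℝ) (hF : Continuous F) (hFpos : ∀ x, 0 < F x)
    (κ : X → ℝ → ℝ)
    (hκ : ∀ x t, κ x t = ∫ s in (0:ℝ)..t, F (φ s x))
    (α : X → ℝ → ℝ)
    (hα₁ : ∀ x t, α x (κ x t) = t)
    (hα₂ : ∀ x t, κ x (α x t) = t)
    (φF : ℝ → X → X)
    (hφF : ∀ t x, φF t x = φ (α x t) x)
    (μ : Measure X) [IsProbabilityMeasure μ]
    (hinv : ∀ t : ℝ, Measure.map (φ t) μ = μ)
    (μF : Measure X)
    (hμF : μF = (ENNReal.ofReal (∫ x, F x ∂μ))⁻¹ •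
        μ.withDensity (fun x => ENNReal.ofReal (F x))) :
    IsProbabilityMeasure μF ∧ ∀ t : ℝ, Measure.map (φF t) μF = μF := by
  obtain rfl : κ = timeChange φ F := funext fun x => funext (hκ x)
  obtain rfl : φF = reparametrize φ α := funext fun t => funext (hφF t)
  set ν := μ.withDensity fun x => ENNReal.ofReal (F x)
  have hFint : Integrable F μ := hF.integrable_of_hasCompactSupport (.of_compactSpace F)
  have : IsFiniteMeasure ν := isFiniteMeasure_withDensity_ofReal hFint.2
  have : NeZero ν := neZero_withDensity_ofReal hF.measurable hFpos
  have hνuniv : ENNReal.ofReal (∫ x, F x ∂μ) = ν univ := by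
    rw [withDensity_apply _ MeasurableSet.univ, Measure.restrict_univ,
      ofReal_integral_eq_lintegral_ofReal hFint (ae_of_all _ fun x => (hFpos x).le)]
  rw [hνuniv] at hμF
  subst hμF
  refine ⟨inferInstance, fun t => ?_⟩
  rw [Measure.map_smul, map_eq_self_of_setLIntegral_Ioc (ψ := reparametrize φ α)
    (measurable_reparametrize hφc hF hFpos hα₂)
    (reparametrize_zero hφ0 hα₁) (reparametrize_add hφc hF hφadd hα₁ hα₂)
    (fun S hS u _ => setLIntegral_Ioc_withDensity_preimage_reparametrize hφc hφ0 hφadd hF hFpos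
      hα₁ hα₂ hinv hS u) t]
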